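/- There exists δ₀ ∈ (0, 1/2) such that for every δ with 0 < δ ≤ δ₀ and every z ≥ 0, P(Z ≥ z + 1 − δ·z − 3δ·ln(1/δ)) ≥ δ · P(Z ≥ 0) · P(Z ≥ z). (Recursive inequality for the right tail.) -/

import Mathlib

/-!
On the event `{U ≥ 1 - δ, Z' ≥ z, Z'' ≥ 0}`, whose probability is `δ · P(Z ≥ z) · P(Z ≥ 0)` by
independence, the fixed-point equation gives `Z ≥ (1 - δ) z + g(U)` in distribution. Near `u = 1`
the toll function satisfies `g(u) ≥ 1 - 2δ + 2δ log δ`, because `u log u ≥ u - 1` and `x ↦ x log x`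
is decreasing on `[0, e⁻¹]`; this is at least `1 + 3δ log δ` once `log δ ≤ -2`.
-/

open MeasureTheory ProbabilityTheory Real Set

noncomputable def quicksortToll (u : ℝ) : ℝ :=
  2 * u * log u + 2 * (1 - u) * log (1 - u) + 1

lemma exp_neg_two_lt_half : exp (-2) < 1 / 2 := by
  have := add_one_le_exp 2
  rw [exp_neg, inv_lt_comm₀ (exp_pos 2) (by norm_num)]
  linarith

lemma one_add_three_mul_mul_log_le_quicksortToll {δ u : ℝ} (hδ : 0 < δ) (hδ₀ : δ ≤ exp (-2))
    (hu : u ∈ Icc (1 - δ) 1) : 1 + 3 * δ * log δ ≤ quicksortToll u := by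
  obtain ⟨hu₁, hu₂⟩ := hu
  have hδ_le_one : δ ≤ 1 := by linarith [exp_neg_two_lt_half]
  have hδe : δ ≤ exp (-1) := hδ₀.trans (exp_le_exp.mpr (by norm_num))
  have hlogδ : log δ ≤ -2 := by simpa using log_le_log hδ hδ₀
  have hnear_one : u - 1 ≤ u * log u := self_sub_one_le_mul_log (by linarith)
  have hnear_zero : δ * log δ ≤ (1 - u) * log (1 - u) :=
    mul_log_strictAntiOn.antitoneOn ⟨by linarith, by linarith⟩ ⟨hδ.le, hδe⟩ (by linarith)
  have hsmall : δ * log δ ≤ δ * -2 := mul_le_mul_of_nonneg_left hlogδ hδ.le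
  unfold quicksortToll
  linarith

lemma tail_threshold_le_quicksort_recursion {δ z u x y : ℝ} (hδ : 0 < δ) (hδ₀ : δ ≤ exp (-2))
    (hz : 0 ≤ z) (hu : u ∈ Icc (1 - δ) 1) (hx : z ≤ x) (hy : 0 ≤ y) :
    z + 1 - δ * z - 3 * δ * log (1 / δ) ≤ u * x + (1 - u) * y + quicksortToll u := by
  have htoll := one_add_three_mul_mul_log_le_quicksortToll hδ hδ₀ hu
  have hδ_le_one : δ ≤ 1 := by linarith [exp_neg_two_lt_half]
  have hux : (1 - δ) * z ≤ u * x := mul_le_mul hu.1 hx hz (by linarith [hu.1])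
  have huy : 0 ≤ (1 - u) * y := mul_nonneg (by linarith [hu.2]) hy
  rw [one_div, log_inv]
  linarith

lemma ProbabilityTheory.iIndepFun.measure_inter_preimage_eq_mul_three {Ω β : Type*}
    [MeasurableSpace Ω] [MeasurableSpace β] {μ : Measure Ω} {f g h : Ω → β}
    (hind : iIndepFun ![f, g, h] μ) {A B C : Set β} (hA : MeasurableSet A)
    (hB : MeasurableSet B) (hC : MeasurableSet C) :
    μ (f ⁻¹' A ∩ g ⁻¹' B ∩ h ⁻¹' C) = μ (f ⁻¹' A) * μ (g ⁻¹' B) * μ (h ⁻¹' C) := by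
  have key := hind.measure_inter_preimage_eq_mul Finset.univ (sets := ![A, B, C])
    (fun i _ => by fin_cases i <;> assumption)
  have hinter : ⋂ i, ![f, g, h] i ⁻¹' ![A, B, C] i = f ⁻¹' A ∩ g ⁻¹' B ∩ h ⁻¹' C := by
    ext ω
    simp [Fin.forall_fin_succ, and_assoc]
  simpa [Fin.prod_univ_three, hinter, mul_assoc] using key

lemma measure_preimage_Icc_of_map_eq_uniform {Ω : Type*} [MeasurableSpace Ω] {μ : Measure Ω}
    {U : Ω → ℝ} (hUm : Measurable U) (hU : μ.map U = volume.restrict (Icc 0 1)) {a b : ℝ}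
    (ha : 0 ≤ a) (hb : b ≤ 1) : μ (U ⁻¹' Icc a b) = ENNReal.ofReal (b - a) := by
  rw [← Measure.map_apply hUm measurableSet_Icc, hU, Measure.restrict_apply measurableSet_Icc,
    inter_eq_left.mpr (Icc_subset_Icc ha hb), volume_Icc]

theorem quicksort_right_tail_recursive_inequality_general
    {Ω : Type*} [MeasureSpace Ω] [IsProbabilityMeasure (ℙ : Measure Ω)]
    (Z Z' Z'' U : Ω → ℝ) (g : ℝ → ℝ)
    (hg : ∀ u : ℝ, g u = 2 * u * Real.log u + 2 * (1 - u) * Real.log (1 - u) + 1)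
    (hUm : Measurable U)
    (hZ' : IdentDistrib Z' Z ℙ ℙ) (hZ'' : IdentDistrib Z'' Z ℙ ℙ)
    (hU : Measure.map U ℙ = volume.restrict (Set.Icc (0 : ℝ) 1))
    (hindep : iIndepFun ![U, Z', Z''] ℙ)
    (hrec : IdentDistrib Z (fun ω => U ω * Z' ω + (1 - U ω) * Z'' ω + g (U ω)) ℙ ℙ) :
    ∃ δ₀ ∈ Set.Ioo (0 : ℝ) (1 / 2), ∀ δ : ℝ, 0 < δ → δ ≤ δ₀ → ∀ z ≥ (0 : ℝ),
      δ * (ℙ {ω | 0 ≤ Z ω}).toReal * (ℙ {ω | z ≤ Z ω}).toReal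
        ≤ (ℙ {ω | z + 1 - δ * z - 3 * δ * Real.log (1 / δ) ≤ Z ω}).toReal := by
  refine ⟨exp (-2), ⟨exp_pos _, exp_neg_two_lt_half⟩, fun δ hδ hδ₀ z hz => ?_⟩
  have hδ_le_one : δ ≤ 1 := by linarith [exp_neg_two_lt_half]
  set t := z + 1 - δ * z - 3 * δ * log (1 / δ)
  have hsub : U ⁻¹' Icc (1 - δ) 1 ∩ Z' ⁻¹' Ici z ∩ Z'' ⁻¹' Ici 0 ⊆
      (fun ω => U ω * Z' ω + (1 - U ω) * Z'' ω + g (U ω)) ⁻¹' Ici t := by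
    rintro ω ⟨⟨hu, hx⟩, hy⟩
    rw [mem_preimage, mem_Ici, hg]
    exact tail_threshold_le_quicksort_recursion hδ hδ₀ hz hu hx hy
  have key : ENNReal.ofReal δ * ℙ (Z ⁻¹' Ici 0) * ℙ (Z ⁻¹' Ici z) ≤ ℙ (Z ⁻¹' Ici t) :=
    calc ENNReal.ofReal δ * ℙ (Z ⁻¹' Ici 0) * ℙ (Z ⁻¹' Ici z)
        = ℙ (U ⁻¹' Icc (1 - δ) 1) * ℙ (Z' ⁻¹' Ici z) * ℙ (Z'' ⁻¹' Ici 0) := by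
          rw [measure_preimage_Icc_of_map_eq_uniform hUm hU (by linarith) le_rfl,
            hZ'.measure_mem_eq measurableSet_Ici, hZ''.measure_mem_eq measurableSet_Ici]
          ring_nf
      _ = ℙ (U ⁻¹' Icc (1 - δ) 1 ∩ Z' ⁻¹' Ici z ∩ Z'' ⁻¹' Ici 0) :=
          (hindep.measure_inter_preimage_eq_mul_three measurableSet_Icc measurableSet_Ici
            measurableSet_Ici).symm
      _ ≤ ℙ (Z ⁻¹' Ici t) := (measure_mono hsub).trans_eq
          (hrec.measure_mem_eq measurableSet_Ici).symm
  have hreal := ENNReal.toReal_mono (measure_ne_top _ _) key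
  rw [ENNReal.toReal_mul, ENNReal.toReal_mul, ENNReal.toReal_ofReal hδ.le] at hreal
  exact hreal

/-- Recursive inequality for the right tail: there is
`δ₀ ∈ (0, 1/2)` such that for all `0 < δ ≤ δ₀` and all `z ≥ 0`,
`P(Z ≥ z + 1 - δ·z - 3δ·ln(1/δ)) ≥ δ · P(Z ≥ 0) · P(Z ≥ z)`. -/
theorem quicksort_right_tail_recursive_inequality
    {Ω : Type*} [MeasureSpace Ω] [IsProbabilityMeasure (ℙ : Measure Ω)]
    (Z Z' Z'' U : Ω → ℝ) (g : ℝ → ℝ)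
    (hg : ∀ u : ℝ, g u = 2 * u * Real.log u + 2 * (1 - u) * Real.log (1 - u) + 1)
    (hZm : Measurable Z) (hZ'm : Measurable Z') (hZ''m : Measurable Z'')
    (hUm : Measurable U)
    (hZ' : IdentDistrib Z' Z ℙ ℙ) (hZ'' : IdentDistrib Z'' Z ℙ ℙ)
    (hU : Measure.map U ℙ = volume.restrict (Set.Icc (0 : ℝ) 1))
    (hindep : iIndepFun ![U, Z', Z''] ℙ)
    (hrec : IdentDistrib Z (fun ω => U ω * Z' ω + (1 - U ω) * Z'' ω + g (U ω)) ℙ ℙ)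
    (hmean : ∫ ω, Z ω ∂ℙ = 0)
    (hmgf : ∀ t : ℝ, Integrable (fun ω => Real.exp (t * Z ω)) ℙ) :
    ∃ δ₀ ∈ Set.Ioo (0 : ℝ) (1 / 2), ∀ δ : ℝ, 0 < δ → δ ≤ δ₀ → ∀ z ≥ (0 : ℝ),
      δ * (ℙ {ω | 0 ≤ Z ω}).toReal * (ℙ {ω | z ≤ Z ω}).toReal
        ≤ (ℙ {ω | z + 1 - δ * z - 3 * δ * Real.log (1 / δ) ≤ Z ω}).toReal :=
  quicksort_right_tail_recursive_inequality_general Z Z' Z'' U g hg hUm hZ' hZ'' hU hindep hrec
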